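/- arXiv:1909.07297 — 5 statements merged into one kernel-verified Lean document; each statement's English description precedes it below -/
import Mathlib

section
/- Let C₅ be the digital cycle of 5 points, id its identity map, and c : C₅ → C₅ a constant map. Then every continuous map f : C₅ → C₅ homotopic to id satisfies #C(f, c) = 1; that is, the spectrum of coincidence point counts obtained by deforming only the first map satisfies HCS*(id, c) = {1}. -/
/-- A map between digital images (modeled as simple graphs) is digitally continuous
if adjacent points are sent to equal or adjacent points. -/
def DigContinuous {X Y : Type*} (G : SimpleGraph X) (H : SimpleGraph Y)
    (f : X → Y) : Prop :=
  ∀ ⦃x y⦄, G.Adj x y → f x = f y ∨ H.Adj (f x) (f y)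

/-- Digital homotopy between (continuous) maps `f` and `g`. -/
def DigHomotopic {X Y : Type*} (G : SimpleGraph X) (H : SimpleGraph Y)
    (f g : X → Y) : Prop :=
  DigContinuous G H f ∧ DigContinuous G H g ∧
  ∃ m : ℕ, ∃ F : X → ℕ → Y,
    (∀ x, F x 0 = f x) ∧ (∀ x, F x m = g x) ∧
    (∀ x, ∀ t, t < m → F x t = F x (t + 1) ∨ H.Adj (F x t) (F x (t + 1))) ∧
    (∀ t, t ≤ m → DigContinuous G H (fun x => F x t))

/-- The digital cycle on 5 points: vertices `ZMod 5`, with `i` adjacent to `i ± 1`. -/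
def C5 : SimpleGraph (ZMod 5) where
  Adj i j := j = i + 1 ∨ i = j + 1
  symm := by constructor; decide
  loopless := by constructor; decide

lemma c5_adj (x y : ZMod 5) : C5.Adj x y ↔ (y = x + 1 ∨ x = y + 1) := Iff.rfl

set_option maxRecDepth 20000 in
set_option synthInstance.maxSize 10000 in
set_option synthInstance.maxHeartbeats 1000000 in
lemma rot5 : ∀ a b c d e : ZMod 5,
    ((a = b ∨ b = a + 1 ∨ a = b + 1) ∧
    (b = c ∨ c = b + 1 ∨ b = c + 1) ∧
    (c = d ∨ d = c + 1 ∨ c = d + 1) ∧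
    (d = e ∨ e = d + 1 ∨ d = e + 1) ∧
    (e = a ∨ a = e + 1 ∨ e = a + 1) ∧
    (a = 0 ∨ 0 = a + 1 ∨ a = 0 + 1) ∧
    (b = 1 ∨ 1 = b + 1 ∨ b = 1 + 1) ∧
    (c = 2 ∨ 2 = c + 1 ∨ c = 2 + 1) ∧
    (d = 3 ∨ 3 = d + 1 ∨ d = 3 + 1) ∧
    (e = 4 ∨ 4 = e + 1 ∨ e = 4 + 1)) →
    ∃ k : ZMod 5, a = 0 + k ∧ b = 1 + k ∧ c = 2 + k ∧ d = 3 + k ∧ e = 4 + k := by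
  decide

lemma rot_of_close (f : ZMod 5 → ZMod 5)
    (hc : ∀ x y : ZMod 5, (y = x + 1 ∨ x = y + 1) →
        f x = f y ∨ (f y = f x + 1 ∨ f x = f y + 1))
    (hd : ∀ x : ZMod 5, f x = x ∨ (x = f x + 1 ∨ f x = x + 1)) :
    ∃ k, ∀ x, f x = x + k := by
  obtain ⟨k, h0, h1, h2, h3, h4⟩ := rot5 (f 0) (f 1) (f 2) (f 3) (f 4)
    ⟨hc 0 1 (Or.inl (by decide)), hc 1 2 (Or.inl (by decide)),
     hc 2 3 (Or.inl (by decide)), hc 3 4 (Or.inl (by decide)),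
     hc 4 0 (Or.inl (by decide)),
     hd 0, hd 1, hd 2, hd 3, hd 4⟩
  have hx : ∀ x : ZMod 5, x = 0 ∨ x = 1 ∨ x = 2 ∨ x = 3 ∨ x = 4 := by decide
  refine ⟨k, fun x => ?_⟩
  rcases hx x with rfl | rfl | rfl | rfl | rfl <;> assumption

lemma rot_step (k : ZMod 5) (f : ZMod 5 → ZMod 5)
    (hc : DigContinuous C5 C5 f)
    (hd : ∀ x, f x = x + k ∨ C5.Adj (f x) (x + k)) :
    ∃ k', ∀ x, f x = x + k' := by
  have h1 : ∀ x y : ZMod 5, (y = x + 1 ∨ x = y + 1) →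
      f x - k = f y - k ∨ (f y - k = (f x - k) + 1 ∨ f x - k = (f y - k) + 1) := by
    intro x y hxy
    rcases hc ((c5_adj x y).mpr hxy) with h | h
    · exact Or.inl (by linear_combination h)
    · rcases (c5_adj _ _).mp h with h | h
      · exact Or.inr (Or.inl (by linear_combination h))
      · exact Or.inr (Or.inr (by linear_combination h))
  have h2 : ∀ x : ZMod 5, f x - k = x ∨ (x = (f x - k) + 1 ∨ f x - k = x + 1) := by
    intro x
    rcases hd x with h | h
    · exact Or.inl (by linear_combination h)
    · rcases (c5_adj _ _).mp h with h | h
      · exact Or.inr (Or.inl (by linear_combination h))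
      · exact Or.inr (Or.inr (by linear_combination h))
  obtain ⟨k', hk'⟩ := rot_of_close (fun x => f x - k) h1 h2
  exact ⟨k' + k, fun x => by have := hk' x; linear_combination this⟩

lemma rotation_of_homotopic_id (g : ZMod 5 → ZMod 5)
    (hg : DigHomotopic C5 C5 g id) : ∃ k, ∀ x, g x = x + k := by
  obtain ⟨-, -, m, F, h0, hm, hstep, hcont⟩ := hg
  have rot : ∀ j, j ≤ m → ∃ k, ∀ x, F x (m - j) = x + k := by
    intro j
    induction j with
    | zero =>
      intro _
      exact ⟨0, fun x => by simpa using hm x⟩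
    | succ j ih =>
      intro hj
      obtain ⟨k, hk⟩ := ih (Nat.le_of_succ_le hj)
      have ht : m - j = (m - (j + 1)) + 1 := by omega
      apply rot_step k (fun x => F x (m - (j + 1))) (hcont _ (by omega))
      intro x
      have h := hstep x (m - (j + 1)) (by omega)
      rw [← ht, hk x] at h
      exact h
  obtain ⟨k, hk⟩ := rot m le_rfl
  exact ⟨k, fun x => by have := hk x; rw [Nat.sub_self, h0] at this; exact this⟩

/-- on the 5-cycle, every map homotopic to the identity has exactly one
coincidence point with a constant map; i.e. HCS*(id, c) = {1}. -/
theorem C5_HCSstar_id_const (x₀ : ZMod 5) :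
    (∀ g : ZMod 5 → ZMod 5, DigHomotopic C5 C5 g id →
      {x : ZMod 5 | g x = x₀}.ncard = 1) ∧
    {n | ∃ g : ZMod 5 → ZMod 5, DigHomotopic C5 C5 g id ∧
      {x : ZMod 5 | g x = x₀}.ncard = n} = {1} := by
  have main : ∀ g : ZMod 5 → ZMod 5, DigHomotopic C5 C5 g id →
      {x : ZMod 5 | g x = x₀}.ncard = 1 := by
    intro g hg
    obtain ⟨k, hk⟩ := rotation_of_homotopic_id g hg
    have : {x : ZMod 5 | g x = x₀} = {x₀ - k} := by
      ext x
      simp only [Set.mem_setOf_eq, Set.mem_singleton_iff, hk x]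
      constructor
      · intro h; linear_combination h
      · intro h; linear_combination h
    rw [this, Set.ncard_singleton]
  refine ⟨main, ?_⟩
  ext n
  simp only [Set.mem_setOf_eq, Set.mem_singleton_iff]
  constructor
  · rintro ⟨g, hg, hn⟩
    rw [← hn]
    exact main g hg
  · rintro rfl
    refine ⟨id, ⟨fun x y h => Or.inr h, fun x y h => Or.inr h,
      0, fun x _ => x, fun x => rfl, fun x => rfl, fun x t ht => absurd ht (by omega),
      fun t _ => fun x y h => Or.inr h⟩, ?_⟩
    have : {x : ZMod 5 | id x = x₀} = {x₀} := by ext x; simp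
    rw [this, Set.ncard_singleton]
end

section
/- Let C₅ be the digital cycle of 5 points, id its identity map, and c : C₅ → C₅ a constant map. Then the homotopy coincidence point spectrum of id and c, where both maps may be deformed by homotopy, is HCS(id, c) = {0, 1, 2, 3}. -/
/-- The homotopy coincidence point spectrum of two self-maps. -/
def HCS {X : Type*} (G : SimpleGraph X) (f₁ f₂ : X → X) : Set ℕ :=
  {n | ∃ g₁ g₂ : X → X, DigHomotopic G G g₁ f₁ ∧ DigHomotopic G G g₂ f₂ ∧
    {x : X | g₁ x = g₂ x}.ncard = n}

instance : DecidableRel C5.Adj := fun a b =>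
  inferInstanceAs (Decidable (b = a + 1 ∨ a = b + 1))

namespace C5Aux

def lift (d : ZMod 5) : ℤ := if d = 1 then 1 else if d = 4 then -1 else 0

def deg (f : ZMod 5 → ZMod 5) : ℤ := ∑ i : ZMod 5, lift (f (i + 1) - f i)

lemma key : ∀ a b c d : ZMod 5,
    (a = b ∨ C5.Adj a b) → (c = d ∨ C5.Adj c d) →
    (a = c ∨ C5.Adj a c) → (b = d ∨ C5.Adj b d) →
    lift (d - c) - lift (b - a) = lift (d - b) - lift (c - a) := by decide

lemma hAdj : ∀ i : ZMod 5, C5.Adj i (i + 1) := by decide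

lemma deg_step {f g : ZMod 5 → ZMod 5} (hf : DigContinuous C5 C5 f)
    (hg : DigContinuous C5 C5 g) (h : ∀ x, f x = g x ∨ C5.Adj (f x) (g x)) :
    deg f = deg g := by
  have key_i : ∀ i : ZMod 5,
      lift (g (i + 1) - g i) - lift (f (i + 1) - f i)
        = lift (g (i + 1) - f (i + 1)) - lift (g i - f i) := fun i =>
    key (f i) (f (i + 1)) (g i) (g (i + 1)) (hf (hAdj i)) (hg (hAdj i)) (h i) (h (i + 1))
  have h1 : deg g - deg f =
      (∑ i : ZMod 5, lift (g (i + 1) - f (i + 1))) - ∑ i : ZMod 5, lift (g i - f i) := by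
    rw [deg, deg, ← Finset.sum_sub_distrib, ← Finset.sum_sub_distrib]
    exact Finset.sum_congr rfl (fun i _ => key_i i)
  have h2 : (∑ i : ZMod 5, lift (g (i + 1) - f (i + 1))) = ∑ i : ZMod 5, lift (g i - f i) :=
    Fintype.sum_equiv (Equiv.addRight (1 : ZMod 5))
      (fun i => lift (g (i + 1) - f (i + 1))) (fun i => lift (g i - f i)) (fun i => rfl)
  linarith

lemma deg_homotopic {f g : ZMod 5 → ZMod 5} (h : DigHomotopic C5 C5 f g) :
    deg f = deg g := by
  obtain ⟨hf, hg, m, F, h0, hm, hstep, hcont⟩ := h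
  have main : ∀ t, t ≤ m → deg (fun x => F x 0) = deg (fun x => F x t) := by
    intro t
    induction t with
    | zero => intro _; rfl
    | succ t ih =>
      intro ht
      have ht' : t ≤ m := Nat.le_of_succ_le ht
      rw [ih ht']
      exact deg_step (hcont t ht') (hcont (t + 1) ht) (fun x => hstep x t ht)
  have e0 : (fun x => F x 0) = f := funext h0
  have em : (fun x => F x m) = g := funext hm
  have := main m le_rfl
  rwa [e0, em] at this

lemma deg_id : deg (id : ZMod 5 → ZMod 5) = 5 := by decide

lemma deg_const (c : ZMod 5) : deg (fun _ => c) = 0 := by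
  simp only [deg, lift, sub_self]
  decide

lemma lift_bound : ∀ d : ZMod 5, -1 ≤ lift d ∧ lift d ≤ 1 := by decide

lemma sub_one_ne : ∀ a : ZMod 5, a - 1 ≠ a := by decide

lemma near_eq_deg {g₁ g₂ : ZMod 5 → ZMod 5} (a : ZMod 5)
    (h : ∀ x, x ≠ a → g₁ x = g₂ x) :
    deg g₁ - deg g₂ ≤ 4 ∧ -4 ≤ deg g₁ - deg g₂ := by
  classical
  set h' : ZMod 5 → ℤ :=
    fun i => lift (g₁ (i + 1) - g₁ i) - lift (g₂ (i + 1) - g₂ i) with hh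
  have hzero : ∀ i ∈ Finset.univ, i ∉ ({a - 1, a} : Finset (ZMod 5)) → h' i = 0 := by
    intro i _ hi
    simp only [Finset.mem_insert, Finset.mem_singleton, not_or] at hi
    have h2 : g₁ (i + 1) = g₂ (i + 1) := by
      refine h (i + 1) (fun e => hi.1 ?_)
      exact eq_sub_of_add_eq e
    have h1 : g₁ i = g₂ i := h i hi.2
    simp [h', h1, h2]
  have hsum : deg g₁ - deg g₂ = ∑ i ∈ ({a - 1, a} : Finset (ZMod 5)), h' i := by
    rw [deg, deg, ← Finset.sum_sub_distrib]
    exact (Finset.sum_subset (Finset.subset_univ _) hzero).symm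
  rw [Finset.sum_pair (sub_one_ne a)] at hsum
  simp only [h'] at hsum
  obtain ⟨b1, b2⟩ := lift_bound (g₁ (a - 1 + 1) - g₁ (a - 1))
  obtain ⟨b3, b4⟩ := lift_bound (g₂ (a - 1 + 1) - g₂ (a - 1))
  obtain ⟨b5, b6⟩ := lift_bound (g₁ (a + 1) - g₁ a)
  obtain ⟨b7, b8⟩ := lift_bound (g₂ (a + 1) - g₂ a)
  constructor <;> linarith

lemma card_le_three {g₁ g₂ : ZMod 5 → ZMod 5}
    (hd : deg g₁ = 5) (hd2 : deg g₂ = 0) :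
    {x : ZMod 5 | g₁ x = g₂ x}.ncard ≤ 3 := by
  by_contra hc
  push_neg at hc
  classical
  set s : Finset (ZMod 5) := Finset.univ.filter (fun x => g₁ x = g₂ x) with hs
  have hset : {x : ZMod 5 | g₁ x = g₂ x} = ↑s := by ext x; simp [hs]
  rw [hset, Set.ncard_coe_finset] at hc
  have hcompl : sᶜ.card ≤ 1 := by
    have h1 := Finset.card_compl s
    have h5 : Fintype.card (ZMod 5) = 5 := by decide
    omega
  obtain ⟨a, ha⟩ := Finset.card_le_one_iff_subset_singleton.mp hcompl
  have hx : ∀ x, x ≠ a → g₁ x = g₂ x := by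
    intro x hxa
    by_contra hne
    have hmem : x ∈ sᶜ := by simp [hs, hne]
    have := ha hmem
    simp only [Finset.mem_singleton] at this
    exact hxa this
  have := near_eq_deg a hx
  omega

end C5Aux

namespace C5Aux

lemma digCont_id : DigContinuous C5 C5 (id : ZMod 5 → ZMod 5) := fun _ _ h => Or.inr h

lemma homotopic_refl {f : ZMod 5 → ZMod 5} (hf : DigContinuous C5 C5 f) :
    DigHomotopic C5 C5 f f :=
  ⟨hf, hf, 0, fun x _ => f x, fun _ => rfl, fun _ => rfl,
    fun _ t ht => absurd ht (Nat.not_lt_zero t), fun _ _ => hf⟩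

lemma homotopic_one_step (f g : ZMod 5 → ZMod 5)
    (hf : DigContinuous C5 C5 f) (hg : DigContinuous C5 C5 g)
    (h : ∀ x, f x = g x ∨ C5.Adj (f x) (g x)) :
    DigHomotopic C5 C5 f g := by
  refine ⟨hf, hg, 1, fun x t => if t = 0 then f x else g x, fun x => rfl, fun x => rfl,
    ?_, ?_⟩
  · intro x t ht
    have h0 : t = 0 := by omega
    subst h0
    exact h x
  · intro t ht
    interval_cases t
    · exact hf
    · exact hg

lemma homotopic_two_step (f g k : ZMod 5 → ZMod 5)
    (hf : DigContinuous C5 C5 f) (hg : DigContinuous C5 C5 g) (hk : DigContinuous C5 C5 k)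
    (h1 : ∀ x, f x = g x ∨ C5.Adj (f x) (g x))
    (h2 : ∀ x, g x = k x ∨ C5.Adj (g x) (k x)) :
    DigHomotopic C5 C5 f k := by
  refine ⟨hf, hk, 2, fun x t => if t = 0 then f x else if t = 1 then g x else k x,
    fun x => rfl, fun x => rfl, ?_, ?_⟩
  · intro x t ht
    interval_cases t
    · exact h1 x
    · exact h2 x
  · intro t ht
    interval_cases t
    · exact hf
    · exact hg
    · exact hk

def shift (c : ZMod 5) (f : ZMod 5 → ZMod 5) : ZMod 5 → ZMod 5 := fun x => c + f (x - c)

lemma adj_shift : ∀ c a b : ZMod 5, C5.Adj a b → C5.Adj (c + a) (c + b) := by decide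

lemma cont_shift {f : ZMod 5 → ZMod 5} (c : ZMod 5) (hf : DigContinuous C5 C5 f) :
    DigContinuous C5 C5 (shift c f) := by
  intro x y h
  have h' : C5.Adj (x - c) (y - c) := by
    simpa [sub_eq_neg_add] using adj_shift (-c) x y h
  rcases hf h' with he | ha
  · left; simp [shift, he]
  · right; exact adj_shift c _ _ ha

lemma homotopic_shift {f g : ZMod 5 → ZMod 5} (c : ZMod 5)
    (h : DigHomotopic C5 C5 f g) :
    DigHomotopic C5 C5 (shift c f) (shift c g) := by
  obtain ⟨hf, hg, m, F, h0, hm, hstep, hcont⟩ := h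
  refine ⟨cont_shift c hf, cont_shift c hg, m, fun x t => c + F (x - c) t,
    fun x => by simp [shift, h0], fun x => by simp [shift, hm],
    fun x t ht => ?_, fun t ht => ?_⟩
  · rcases hstep (x - c) t ht with he | ha
    · left; exact congrArg (c + ·) he
    · right; exact adj_shift c _ _ ha
  · exact cont_shift c (hcont t ht)

lemma shift_const (c : ZMod 5) : shift c (fun _ => (0 : ZMod 5)) = fun _ => c := by
  funext x; simp [shift]

-- concrete maps
def p0 : ZMod 5 → ZMod 5 := fun x => if x = 0 then 1 else 0
def p2 : ZMod 5 → ZMod 5 := fun x => if x = 1 then 1 else 0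
def p1 : ZMod 5 → ZMod 5 := fun x => if x = 0 then 0 else 1
def p3 : ZMod 5 → ZMod 5 := fun x =>
  if x = 1 then 1 else if x = 2 then 2 else if x = 3 then 2 else if x = 4 then 1 else 0

lemma cont_p0 : DigContinuous C5 C5 p0 := fun x y h => by revert x y h; decide
lemma cont_p1 : DigContinuous C5 C5 p1 := fun x y h => by revert x y h; decide
lemma cont_p2 : DigContinuous C5 C5 p2 := fun x y h => by revert x y h; decide
lemma cont_p3 : DigContinuous C5 C5 p3 := fun x y h => by revert x y h; decide
lemma cont_zero : DigContinuous C5 C5 (fun _ : ZMod 5 => (0 : ZMod 5)) :=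
  fun _ _ _ => Or.inl rfl

lemma hom_p0 : DigHomotopic C5 C5 p0 (fun _ => (0 : ZMod 5)) :=
  homotopic_one_step _ _ cont_p0 cont_zero (by decide)
lemma hom_p2 : DigHomotopic C5 C5 p2 (fun _ => (0 : ZMod 5)) :=
  homotopic_one_step _ _ cont_p2 cont_zero (by decide)
lemma hom_p3 : DigHomotopic C5 C5 p3 (fun _ => (0 : ZMod 5)) :=
  homotopic_two_step _ p1 _ cont_p3 cont_p1 cont_zero (by decide) (by decide)

lemma fix_p0 : ∀ c x : ZMod 5, ¬ x = c + p0 (x - c) := by decide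
lemma fix_p2 : ∀ c x : ZMod 5, x = c + p2 (x - c) ↔ (x = c ∨ x = c + 1) := by decide
lemma fix_p3 : ∀ c x : ZMod 5,
    x = c + p3 (x - c) ↔ (x = c ∨ x = c + 1 ∨ x = c + 2) := by decide

lemma ne01 : ∀ c : ZMod 5, c ≠ c + 1 := by decide
lemma ne02 : ∀ c : ZMod 5, c ≠ c + 2 := by decide
lemma ne12 : ∀ c : ZMod 5, c + 1 ≠ c + 2 := by decide

end C5Aux


open C5Aux

/-- on the 5-cycle, HCS(id, c) = {0, 1, 2, 3}. -/
theorem C5_HCS_id_const (x₀ : ZMod 5) :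
    HCS C5 id (fun _ => x₀) = ({0, 1, 2, 3} : Set ℕ) := by
  have hid : DigHomotopic C5 C5 (id : ZMod 5 → ZMod 5) id := homotopic_refl digCont_id
  ext n
  simp only [Set.mem_insert_iff, Set.mem_singleton_iff]
  constructor
  · rintro ⟨g₁, g₂, h₁, h₂, hn⟩
    have d1 : deg g₁ = 5 := (deg_homotopic h₁).trans deg_id
    have d2 : deg g₂ = 0 := (deg_homotopic h₂).trans (deg_const x₀)
    have h3 := card_le_three d1 d2
    omega
  · intro hn
    have hshift : ∀ f : ZMod 5 → ZMod 5, DigHomotopic C5 C5 f (fun _ => (0 : ZMod 5)) →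
        DigHomotopic C5 C5 (shift x₀ f) (fun _ => x₀) := by
      intro f hf
      have := homotopic_shift x₀ hf
      rwa [shift_const] at this
    rcases hn with h | h | h | h <;> subst h
    · refine ⟨id, shift x₀ p0, hid, hshift _ hom_p0, ?_⟩
      have : {x : ZMod 5 | id x = shift x₀ p0 x} = ∅ := by
        ext x
        simp only [Set.mem_setOf_eq, Set.mem_empty_iff_false, iff_false, id_eq, shift]
        exact fix_p0 x₀ x
      rw [this, Set.ncard_empty]
    · refine ⟨id, fun _ => x₀, hid, homotopic_refl (fun _ _ _ => Or.inl rfl), ?_⟩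
      have : {x : ZMod 5 | id x = x₀} = {x₀} := by
        ext x; simp
      rw [this, Set.ncard_singleton]
    · refine ⟨id, shift x₀ p2, hid, hshift _ hom_p2, ?_⟩
      have : {x : ZMod 5 | id x = shift x₀ p2 x} = {x₀, x₀ + 1} := by
        ext x
        simp only [Set.mem_setOf_eq, id_eq, shift, Set.mem_insert_iff, Set.mem_singleton_iff]
        exact fix_p2 x₀ x
      rw [this, Set.ncard_pair (ne01 x₀)]
    · refine ⟨id, shift x₀ p3, hid, hshift _ hom_p3, ?_⟩
      have : {x : ZMod 5 | id x = shift x₀ p3 x} = {x₀, x₀ + 1, x₀ + 2} := by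
        ext x
        simp only [Set.mem_setOf_eq, id_eq, shift, Set.mem_insert_iff, Set.mem_singleton_iff]
        exact fix_p3 x₀ x
      rw [this]
      rw [Set.ncard_insert_of_notMem (by simp [ne01 x₀, ne02 x₀]),
        Set.ncard_pair (ne12 x₀)]
end

section
/- Let C₅ be the digital cycle of 5 points, c : C₅ → C₅ a constant map, and id its identity map. Then the spectrum of coincidence point counts obtained by deforming only the first map is HCS*(c, id) = {0, 1, 2, 3}; that is, {#C(g, id) | g ≃ c} = {0, 1, 2, 3}. -/
instance inst_s9 : DecidableRel C5.Adj :=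
  fun i j => inferInstanceAs (Decidable (j = i + 1 ∨ i = j + 1))

instance (f : ZMod 5 → ZMod 5) : Decidable (DigContinuous C5 C5 f) :=
  inferInstanceAs (Decidable (∀ x y, C5.Adj x y → f x = f y ∨ C5.Adj (f x) (f y)))

/-- Signed step: `1` for a forward step, `-1` for a backward step, `0` otherwise. -/
def dd (u : ZMod 5) : ℤ := if u = 1 then 1 else if u = 4 then -1 else 0

/-- (Five times the) winding degree of a map of the 5-cycle. -/
def deg (f : ZMod 5 → ZMod 5) : ℤ := ∑ i : ZMod 5, dd (f (i + 1) - f i)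

lemma quad : ∀ a b a' b' : ZMod 5,
    (a = b ∨ C5.Adj a b) → (a' = b' ∨ C5.Adj a' b') →
    (a = a' ∨ C5.Adj a a') → (b = b' ∨ C5.Adj b b') →
    dd (b - a) + dd (b' - b) = dd (a' - a) + dd (b' - a') := by decide

lemma adj_succ (i : ZMod 5) : C5.Adj i (i + 1) := Or.inl rfl

lemma deg_step (f f' : ZMod 5 → ZMod 5) (hf : DigContinuous C5 C5 f)
    (hf' : DigContinuous C5 C5 f')
    (hcl : ∀ x, f x = f' x ∨ C5.Adj (f x) (f' x)) : deg f = deg f' := by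
  have key : ∀ i : ZMod 5,
      dd (f (i + 1) - f i) + dd (f' (i + 1) - f (i + 1))
        = dd (f' i - f i) + dd (f' (i + 1) - f' i) :=
    fun i => quad (f i) (f (i + 1)) (f' i) (f' (i + 1))
      (hf (adj_succ i)) (hf' (adj_succ i)) (hcl i) (hcl (i + 1))
  have sum1 : ∑ i : ZMod 5, (dd (f (i + 1) - f i) + dd (f' (i + 1) - f (i + 1)))
      = ∑ i : ZMod 5, (dd (f' i - f i) + dd (f' (i + 1) - f' i)) :=
    Finset.sum_congr rfl fun i _ => key i
  have reindex : ∑ i : ZMod 5, dd (f' (i + 1) - f (i + 1))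
      = ∑ i : ZMod 5, dd (f' i - f i) :=
    Fintype.sum_equiv (Equiv.addRight 1) _ _ fun i => rfl
  simp only [Finset.sum_add_distrib] at sum1
  unfold deg
  linarith [sum1, reindex]

lemma deg_homotopic {f g : ZMod 5 → ZMod 5} (h : DigHomotopic C5 C5 f g) :
    deg f = deg g := by
  obtain ⟨hf, hg, m, F, hF0, hFm, hstep, hslice⟩ := h
  have key : ∀ t, t ≤ m → deg (fun x => F x 0) = deg (fun x => F x t) := by
    intro t
    induction t with
    | zero => intro _; rfl
    | succ k ih =>
      intro hk
      have hk' : k ≤ m := Nat.le_of_succ_le hk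
      rw [ih hk']
      exact deg_step _ _ (hslice k hk') (hslice (k + 1) hk) fun x => hstep x k hk
  have e0 : (fun x => F x 0) = f := funext hF0
  have em : (fun x => F x m) = g := funext hFm
  rw [← e0, ← em]
  exact key m le_rfl

lemma deg_id : deg (fun x : ZMod 5 => x) = 5 := by decide

lemma dd_zero : dd 0 = 0 := by decide

lemma deg_const (x₀ : ZMod 5) : deg (fun _ => x₀) = 0 := by
  unfold deg
  simp [sub_self, dd_zero]

lemma fix_mid : ∀ x v : ZMod 5,
    (v = x + 1 ∨ C5.Adj v (x + 1)) → (x - 1 = v ∨ C5.Adj (x - 1) v) → v = x := by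
  decide

lemma eq_id_of_four (g : ZMod 5 → ZMod 5) (hg : DigContinuous C5 C5 g)
    (h4 : 4 ≤ (Finset.univ.filter fun x => g x = x).card) : ∀ x, g x = x := by
  intro x
  by_contra hx
  have hothers : ∀ y : ZMod 5, y ≠ x → g y = y := by
    intro y hy
    by_contra hy'
    have hsub : (Finset.univ.filter fun z => g z = z) ⊆ Finset.univ \ {x, y} := by
      intro z hz
      rw [Finset.mem_filter] at hz
      rw [Finset.mem_sdiff]
      refine ⟨Finset.mem_univ z, ?_⟩
      simp only [Finset.mem_insert, Finset.mem_singleton]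
      rintro (rfl | rfl)
      · exact hx hz.2
      · exact hy' hz.2
    have hle := Finset.card_le_card hsub
    have huniv : (Finset.univ : Finset (ZMod 5)).card = 5 := by decide
    have hpair : ({x, y} : Finset (ZMod 5)).card = 2 :=
      Finset.card_pair fun h => hy h.symm
    rw [Finset.card_sdiff_of_subset (Finset.subset_univ _), huniv, hpair] at hle
    omega
  have hne1 : x + 1 ≠ x := by
    intro h
    have : (1 : ZMod 5) = 0 := by linear_combination h
    exact (by decide : (1 : ZMod 5) ≠ 0) this
  have hne2 : x - 1 ≠ x := by
    intro h
    have : (1 : ZMod 5) = 0 := by linear_combination -h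
    exact (by decide : (1 : ZMod 5) ≠ 0) this
  have e1 : g (x + 1) = x + 1 := hothers _ hne1
  have e2 : g (x - 1) = x - 1 := hothers _ hne2
  have adjA : C5.Adj x (x + 1) := Or.inl rfl
  have adjB : C5.Adj (x - 1) x := Or.inl (by ring)
  have c1 := hg adjA
  rw [e1] at c1
  have c2 := hg adjB
  rw [e2] at c2
  exact hx (fix_mid x (g x) c1 c2)

lemma ncard_fixed_eq (h : ZMod 5 → ZMod 5) :
    {y : ZMod 5 | h y = y}.ncard = (Finset.univ.filter fun y => h y = y).card := by
  rw [show {y : ZMod 5 | h y = y} = ↑(Finset.univ.filter fun y => h y = y) by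
    ext y; simp, Set.ncard_coe_finset]

lemma ncard_fixed_shift (x₀ : ZMod 5) (h : ZMod 5 → ZMod 5) :
    {x : ZMod 5 | x₀ + h (x - x₀) = x}.ncard = {y : ZMod 5 | h y = y}.ncard := by
  have himg : {x : ZMod 5 | x₀ + h (x - x₀) = x} = (fun y => y + x₀) '' {y | h y = y} := by
    ext x
    simp only [Set.mem_setOf_eq, Set.mem_image]
    constructor
    · intro hx
      exact ⟨x - x₀, by linear_combination hx, by simp⟩
    · rintro ⟨y, hy, rfl⟩
      show x₀ + h (y + x₀ - x₀) = y + x₀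
      rw [add_sub_cancel_right, hy, add_comm]
  rw [himg, Set.ncard_image_of_injective _ (add_left_injective x₀)]

lemma adj_shift : ∀ c u v : ZMod 5, C5.Adj u v → C5.Adj (c + u) (c + v) := by decide

lemma cont_shift (x₀ : ZMod 5) {f : ZMod 5 → ZMod 5} (hf : DigContinuous C5 C5 f) :
    DigContinuous C5 C5 fun x => x₀ + f (x - x₀) := by
  intro x y hxy
  have hxy' : C5.Adj (x - x₀) (y - x₀) := by
    have := adj_shift (-x₀) x y hxy
    simpa [neg_add_eq_sub] using this
  rcases hf hxy' with h | h
  · exact Or.inl (show x₀ + f (x - x₀) = x₀ + f (y - x₀) from by rw [h])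
  · exact Or.inr (adj_shift x₀ _ _ h)

lemma homotopic_shift (x₀ : ZMod 5) {h : ZMod 5 → ZMod 5}
    (H : DigHomotopic C5 C5 h fun _ => 0) :
    DigHomotopic C5 C5 (fun x => x₀ + h (x - x₀)) fun _ => x₀ := by
  obtain ⟨hc, hc0, m, F, hF0, hFm, hstep, hslice⟩ := H
  refine ⟨cont_shift x₀ hc, fun x y _ => Or.inl rfl, m, fun x t => x₀ + F (x - x₀) t,
    fun x => show x₀ + F (x - x₀) 0 = x₀ + h (x - x₀) from by rw [hF0],
    fun x => show x₀ + F (x - x₀) m = x₀ from by rw [hFm]; exact add_zero x₀, ?_, ?_⟩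
  · intro x t ht
    rcases hstep (x - x₀) t ht with h | h
    · exact Or.inl (show x₀ + F (x - x₀) t = x₀ + F (x - x₀) (t + 1) from by rw [h])
    · exact Or.inr (adj_shift x₀ _ _ h)
  · intro t ht
    exact cont_shift x₀ (hslice t ht)

lemma star_homotopy (h : ZMod 5 → ZMod 5) (hc : DigContinuous C5 C5 h)
    (hs : ∀ y, h y = 0 ∨ C5.Adj (h y) 0) : DigHomotopic C5 C5 h fun _ => (0 : ZMod 5) := by
  refine ⟨hc, fun x y _ => Or.inl rfl, 1, fun y t => if t = 0 then h y else 0,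
    fun y => rfl, fun y => rfl, ?_, ?_⟩
  · intro y t ht
    have : t = 0 := by omega
    subst this
    exact hs y
  · intro t ht
    rcases Nat.le_one_iff_eq_zero_or_eq_one.mp ht with rfl | rfl
    · exact hc
    · exact fun x y _ => Or.inl rfl

/-- Witness with 0 fixed points (before translation). -/
def w0 : ZMod 5 → ZMod 5 := fun y => if y = 0 then 1 else 0
/-- Witness with 1 fixed point (before translation). -/
def w1 : ZMod 5 → ZMod 5 := fun _ => 0
/-- Witness with 2 fixed points (before translation). -/
def w2 : ZMod 5 → ZMod 5 := fun y => if y = 1 ∨ y = 2 then 1 else 0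
/-- Witness with 3 fixed points (before translation). -/
def w3 : ZMod 5 → ZMod 5 := fun y => if y = 1 ∨ y = 2 then 1 else if y = 4 then 4 else 0

/-- on the 5-cycle, HCS*(c, id) = {0, 1, 2, 3}, i.e. deforming only the
constant map against the fixed identity realizes exactly the counts 0, 1, 2, 3. -/
theorem C5_HCSstar_const_id (x₀ : ZMod 5) :
    {n | ∃ g : ZMod 5 → ZMod 5, DigHomotopic C5 C5 g (fun _ => x₀) ∧
      {x : ZMod 5 | g x = x}.ncard = n} = ({0, 1, 2, 3} : Set ℕ) := by
  ext n
  simp only [Set.mem_setOf_eq, Set.mem_insert_iff, Set.mem_singleton_iff]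
  constructor
  · rintro ⟨g, hg, rfl⟩
    have hdeg : deg g = 0 := by rw [deg_homotopic hg, deg_const]
    have hgc : DigContinuous C5 C5 g := hg.1
    rw [ncard_fixed_eq g]
    by_cases h4 : 4 ≤ (Finset.univ.filter fun x => g x = x).card
    · exfalso
      have hid : g = fun x => x := funext (eq_id_of_four g hgc h4)
      rw [hid, deg_id] at hdeg
      exact absurd hdeg (by norm_num)
    · omega
  · intro hn
    rcases hn with rfl | rfl | rfl | rfl
    · exact ⟨fun x => x₀ + w0 (x - x₀),
        homotopic_shift x₀ (star_homotopy w0 (by decide) (by decide)),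
        by rw [show {x : ZMod 5 | (fun x => x₀ + w0 (x - x₀)) x = x}
            = {x : ZMod 5 | x₀ + w0 (x - x₀) = x} from rfl,
          ncard_fixed_shift, ncard_fixed_eq]; decide⟩
    · exact ⟨fun x => x₀ + w1 (x - x₀),
        homotopic_shift x₀ (star_homotopy w1 (by decide) (by decide)),
        by rw [show {x : ZMod 5 | (fun x => x₀ + w1 (x - x₀)) x = x}
            = {x : ZMod 5 | x₀ + w1 (x - x₀) = x} from rfl,
          ncard_fixed_shift, ncard_fixed_eq]; decide⟩
    · exact ⟨fun x => x₀ + w2 (x - x₀),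
        homotopic_shift x₀ (star_homotopy w2 (by decide) (by decide)),
        by rw [show {x : ZMod 5 | (fun x => x₀ + w2 (x - x₀)) x = x}
            = {x : ZMod 5 | x₀ + w2 (x - x₀) = x} from rfl,
          ncard_fixed_shift, ncard_fixed_eq]; decide⟩
    · exact ⟨fun x => x₀ + w3 (x - x₀),
        homotopic_shift x₀ (star_homotopy w3 (by decide) (by decide)),
        by rw [show {x : ZMod 5 | (fun x => x₀ + w3 (x - x₀)) x = x}
            = {x : ZMod 5 | x₀ + w3 (x - x₀) = x} from rfl,
          ncard_fixed_shift, ncard_fixed_eq]; decide⟩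
end

section
/- Let A be a retract of a digital image (X, κ). Then the common fixed point spectrum of A is contained in that of X: CFS(A) ⊆ CFS(X). -/
/-- The common fixed point spectrum of a digital image. -/
def CFS {X : Type*} (G : SimpleGraph X) : Set ℕ :=
  {n | ∃ f₁ f₂ : X → X, DigContinuous G G f₁ ∧ DigContinuous G G f₂ ∧
    {x : X | f₁ x = x ∧ f₂ x = x}.ncard = n}

/-- if A (with the induced adjacency) is a retract of X, then
CFS(A) ⊆ CFS(X). -/
theorem CFS_subset_of_retract {X : Type*} [Fintype X] (G : SimpleGraph X)
    (A : Set X) (r : X → A) (hr : DigContinuous G (G.induce A) r)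
    (hretr : ∀ a : A, r (a : X) = a) :
    CFS (G.induce A) ⊆ CFS G := by
  rintro n ⟨f₁, f₂, hf₁, hf₂, hn⟩
  refine ⟨fun x => (f₁ (r x) : X), fun x => (f₂ (r x) : X), ?_, ?_, ?_⟩
  · intro x y hxy
    rcases hr hxy with h | h
    · left; exact congrArg (fun a => ((f₁ a : X))) h
    · rcases hf₁ h with h' | h'
      · left; exact congrArg _ h'
      · right; exact h'
  · intro x y hxy
    rcases hr hxy with h | h
    · left; exact congrArg (fun a => ((f₂ a : X))) h
    · rcases hf₂ h with h' | h'
      · left; exact congrArg _ h'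
      · right; exact h'
  · rw [← hn]
    have : {x : X | (f₁ (r x) : X) = x ∧ (f₂ (r x) : X) = x}
        = Subtype.val '' {a : A | f₁ a = a ∧ f₂ a = a} := by
      ext x
      constructor
      · rintro ⟨h1, h2⟩
        have hxA : x ∈ A := h1 ▸ (f₁ (r x)).2
        have hrx : r x = ⟨x, hxA⟩ := hretr ⟨x, hxA⟩
        rw [hrx] at h1 h2
        exact ⟨⟨x, hxA⟩, ⟨Subtype.ext h1, Subtype.ext h2⟩, rfl⟩
      · rintro ⟨a, ⟨h1, h2⟩, rfl⟩
        constructor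
        · rw [hretr a, h1]
        · rw [hretr a, h2]
    rw [this, Set.ncard_image_of_injective _ Subtype.val_injective]
end

section
/- A digital image (X, κ) with X finite and nonempty has the fixed point property if and only if #X = 1. -/
/-- a finite nonempty digital image has the fixed point property
iff it consists of a single point. -/
theorem fpp_iff_card_eq_one {X : Type*} [Fintype X] [Nonempty X] (G : SimpleGraph X) :
    (∀ f : X → X, DigContinuous G G f → ∃ x : X, f x = x) ↔ Fintype.card X = 1 := by
  constructor
  · intro h
    classical
    by_contra hcard
    have h2 : 1 < Fintype.card X := by
      have := Fintype.card_pos (α := X)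
      omega
    by_cases hedge : ∃ u v : X, G.Adj u v
    · obtain ⟨u, v, huv⟩ := hedge
      have hne : u ≠ v := G.ne_of_adj huv
      obtain ⟨x, hx⟩ := h (fun x => if x = u then v else u) (by
        intro x y _
        by_cases hxu : x = u <;> by_cases hyu : y = u <;>
          simp [hxu, hyu, huv, huv.symm])
      by_cases hxu : x = u <;> simp [hxu] at hx <;> [exact hne hx.symm; exact hxu hx.symm]
    · push_neg at hedge
      obtain ⟨a, b, hab⟩ := Fintype.exists_pair_of_one_lt_card h2
      obtain ⟨x, hx⟩ := h (fun x => if x = a then b else a) (by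
        intro x y hxy
        exact absurd hxy (hedge x y))
      by_cases hxa : x = a <;> simp [hxa] at hx <;> [exact hab hx.symm; exact hxa hx.symm]
  · intro hcard f _
    have : Subsingleton X := Fintype.card_le_one_iff_subsingleton.mp hcard.le
    exact ⟨Classical.arbitrary X, Subsingleton.elim _ _⟩
end
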